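/- Let q be a prime power, n ≥ 1 with gcd(n,q) = 1, and ζ a primitive n-th root of unity in an algebraic closure K of F_q. Then μ(F_q,n) = min{ w_H(f) + w_H(f̂) : f ∈ R(F_q,n), f ≠ 0 }, where f̂ is the Mattson–Solomon vector of the degree-< n representative of f. -/

import Mathlib

open Polynomial

/-- The ring R(F,n) = F[X]/(X^n - 1). -/
abbrev CycRing (F : Type*) [Field F] (n : ℕ) := AdjoinRoot (X ^ n - Polynomial.C (1 : F))

/-- The unique representative of degree < n of an element of F[X]/(X^n-1). -/
noncomputable def cycRep {F : Type*} [Field F] {n : ℕ} (f : CycRing F n) : F[X] :=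
  if h : n = 0 then 0
  else AdjoinRoot.modByMonicHom (monic_X_pow_sub_C (1 : F) h) f

/-- Hamming weight of an element of F[X]/(X^n-1): the number of nonzero coefficients of
its representative of degree < n. -/
noncomputable def cycWt {F : Type*} [Field F] {n : ℕ} (f : CycRing F n) : ℕ :=
  (cycRep f).support.card

/-- Minimum distance of a cyclic code (ideal of F[X]/(X^n-1)). -/
noncomputable def cycDist {F : Type*} [Field F] {n : ℕ} (I : Ideal (CycRing F n)) : ℕ :=
  sInf {w | ∃ f ∈ I, f ≠ 0 ∧ cycWt f = w}

/-- Dimension of a cyclic code as an F-vector space. -/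
noncomputable def cycDim (F : Type*) [Field F] {n : ℕ} (I : Ideal (CycRing F n)) : ℕ :=
  Module.finrank F (Submodule.restrictScalars F I)

/-- The invariant μ(F,n). -/
noncomputable def mu (F : Type*) [Field F] (n : ℕ) : ℕ :=
  sInf {w | ∃ f : CycRing F n, f ≠ 0 ∧
    cycDist (Ideal.span {f}) + cycDim F (Ideal.span {f}) = w}

/-- Hamming weight of a vector: its number of nonzero coordinates. -/
noncomputable def wt {ι α : Type*} [Zero α] (v : ι → α) : ℕ := Set.ncard {i | v i ≠ 0}

/-- The Mattson–Solomon vector (g(ζ), g(ζ²), …, g(ζⁿ)) of a polynomial g over F. -/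
noncomputable def msVecPoly {F : Type*} [Field F] (n : ℕ) (ζ : AlgebraicClosure F)
    (g : Polynomial F) : Fin n → AlgebraicClosure F :=
  fun j => Polynomial.aeval (ζ ^ ((j : ℕ) + 1)) g

/-! The dimension of the cyclic code generated by `f` is `n - deg gcd(f, X ^ n - 1)`. Since
`X ^ n - 1` is separable with roots exactly the powers of `ζ`, that degree counts the zero
coordinates of the Mattson–Solomon vector `f̂`, so `dim C(f) = w_H(f̂)`. The two minima then
agree: `d(C(f)) ≤ w_H(f)`, and conversely a minimum-weight word `g` of `C(f)` has
`C(g) ⊆ C(f)`, hence `w_H(g) + w_H(ĝ) = d(C(f)) + dim C(g) ≤ d(C(f)) + dim C(f)`. -/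

section AdjoinRoot

variable {F : Type*} [Field F]

theorem AdjoinRoot.span_mk_gcd [DecidableEq F] (m p : F[X]) :
    Ideal.span {AdjoinRoot.mk m (EuclideanDomain.gcd p m)} = Ideal.span {AdjoinRoot.mk m p} := by
  rw [← Set.image_singleton, ← Ideal.map_span, EuclideanDomain.span_gcd, Ideal.map_span,
    Set.image_pair, AdjoinRoot.mk_self, Set.pair_comm, Ideal.span_insert_zero]

theorem AdjoinRoot.finrank_span_mk_of_dvd {m g : F[X]} (hm : m ≠ 0) (hg : g ∣ m) :
    Module.finrank F ((Ideal.span {AdjoinRoot.mk m g}).restrictScalars F) =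
      m.natDegree - g.natDegree := by
  have hg0 : g ≠ 0 := ne_zero_of_dvd_ne_zero hm hg
  have : FiniteDimensional F (AdjoinRoot m) := (AdjoinRoot.powerBasis hm).finite
  have hquot :
      Module.finrank F (AdjoinRoot m ⧸ Ideal.span {AdjoinRoot.mk m g}) = g.natDegree := by
    have hmap : (Ideal.span {g}).map (Ideal.Quotient.mkₐ F (Ideal.span {m})) =
        Ideal.span {AdjoinRoot.mk m g} := by
      rw [Ideal.map_span, Set.image_singleton]; rfl
    let e : (AdjoinRoot m ⧸ Ideal.span {AdjoinRoot.mk m g}) ≃ₐ[F] AdjoinRoot g :=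
      hmap ▸ DoubleQuot.quotQuotEquivQuotOfLEₐ F (Ideal.span_singleton_le_span_singleton.mpr hg)
    rw [e.toLinearEquiv.finrank_eq, (AdjoinRoot.powerBasis hg0).finrank,
      AdjoinRoot.powerBasis_dim]
  have h := Submodule.finrank_quotient_add_finrank
    ((Ideal.span {AdjoinRoot.mk m g}).restrictScalars F)
  rw [(Submodule.Quotient.restrictScalarsEquiv F _).finrank_eq, hquot,
    (AdjoinRoot.powerBasis hm).finrank, AdjoinRoot.powerBasis_dim] at h
  omega

end AdjoinRoot

section RootsOfUnity

variable {M : Type*} [CommMonoid M] {ζ : M} {n : ℕ}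

theorem IsPrimitiveRoot.pow_val_add_one [NeZero n] (hζ : IsPrimitiveRoot ζ n) (j : Fin n) :
    ζ ^ ((j + 1 : Fin n) : ℕ) = ζ ^ ((j : ℕ) + 1) := by
  rw [Fin.val_add, Fin.val_one', Nat.add_mod_mod, ← pow_mod_orderOf ζ ((j : ℕ) + 1),
    ← hζ.eq_orderOf]

theorem IsPrimitiveRoot.pow_val_comp_addRight_one [NeZero n] (hζ : IsPrimitiveRoot ζ n) :
    (fun j : Fin n => ζ ^ (j : ℕ)) ∘ Equiv.addRight 1 = fun j : Fin n => ζ ^ ((j : ℕ) + 1) :=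
  funext hζ.pow_val_add_one

theorem IsPrimitiveRoot.injective_pow_succ [NeZero n] (hζ : IsPrimitiveRoot ζ n) :
    Function.Injective fun j : Fin n => ζ ^ ((j : ℕ) + 1) := by
  rw [← hζ.pow_val_comp_addRight_one]
  exact Function.Injective.comp
    (fun (a b : Fin n) h => Fin.ext (hζ.pow_inj a.isLt b.isLt h)) (Equiv.injective _)

end RootsOfUnity

section Roots

variable {F K : Type*} [Field F] [Field K] {n : ℕ}

theorem IsPrimitiveRoot.range_pow_succ [NeZero n] {ζ : K} (hζ : IsPrimitiveRoot ζ n) :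
    Set.range (fun j : Fin n => ζ ^ ((j : ℕ) + 1)) = {x | x ^ n = 1} := by
  rw [← hζ.pow_val_comp_addRight_one, EquivLike.range_comp]
  ext x
  constructor
  · rintro ⟨j, rfl⟩
    rw [Set.mem_ofPred_eq, ← pow_mul, mul_comm, pow_mul, hζ.pow_eq_one, one_pow]
  · intro hx
    obtain ⟨i, hi, rfl⟩ := hζ.eq_pow_of_pow_eq_one hx
    exact ⟨⟨i, hi⟩, rfl⟩

theorem rootSet_gcd_X_pow_sub_one [Algebra F K] [DecidableEq F] (hn : n ≠ 0) (p : F[X]) :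
    (EuclideanDomain.gcd p (X ^ n - C 1)).rootSet K = {x | aeval x p = 0 ∧ x ^ n = 1} := by
  have hgcd : EuclideanDomain.gcd p (X ^ n - C 1) ≠ 0 := fun h =>
    X_pow_sub_C_ne_zero (Nat.pos_of_ne_zero hn) (1 : F) (EuclideanDomain.gcd_eq_zero_iff.mp h).2
  ext x
  rw [mem_rootSet', and_iff_right (Polynomial.map_ne_zero hgcd), aeval_def,
    root_gcd_iff_root_left_right, ← aeval_def, ← aeval_def]
  simp [sub_eq_zero]

theorem natDegree_gcd_X_pow_sub_one [Algebra F K] [IsAlgClosed K] [DecidableEq F] [NeZero n]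
    {ζ : K} (hζ : IsPrimitiveRoot ζ n) (p : F[X]) :
    (EuclideanDomain.gcd p (X ^ n - C 1)).natDegree =
      {x : K | aeval x p = 0 ∧ x ^ n = 1}.ncard := by
  have hnF : (n : F) ≠ 0 := fun h =>
    hζ.neZero'.out (by rw [← map_natCast (algebraMap F K), h, map_zero])
  have hsep : (EuclideanDomain.gcd p (X ^ n - C 1)).Separable :=
    (separable_X_pow_sub_C 1 hnF one_ne_zero).of_dvd (EuclideanDomain.gcd_dvd_right _ _)
  rw [← card_rootSet_eq_natDegree hsep (IsAlgClosed.splits (k := K) _),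
    ← Nat.card_eq_fintype_card, Nat.card_coe_set_eq, rootSet_gcd_X_pow_sub_one (NeZero.ne n)]

end Roots

section CyclicCode

variable {F : Type*} [Field F] {n : ℕ}

theorem wt_msVecPoly [DecidableEq F] [NeZero n] {ζ : AlgebraicClosure F}
    (hζ : IsPrimitiveRoot ζ n) (p : F[X]) :
    wt (msVecPoly n ζ p) = n - (EuclideanDomain.gcd p (X ^ n - C 1)).natDegree := by
  set e : Fin n → AlgebraicClosure F := fun j => ζ ^ ((j : ℕ) + 1)
  have hsupp : {j | msVecPoly n ζ p j ≠ 0} = (e ⁻¹' {x | aeval x p = 0})ᶜ := rfl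
  rw [wt, hsupp, Set.ncard_compl, Nat.card_eq_fintype_card, Fintype.card_fin,
    ← Set.ncard_image_of_injective _ hζ.injective_pow_succ, Set.image_preimage_eq_inter_range,
    hζ.range_pow_succ, natDegree_gcd_X_pow_sub_one hζ]
  rfl

theorem mk_cycRep (hn : n ≠ 0) (f : CycRing F n) :
    AdjoinRoot.mk (X ^ n - C 1) (cycRep f) = f := by
  rw [cycRep, dif_neg hn]
  exact AdjoinRoot.mk_leftInverse (monic_X_pow_sub_C 1 hn) f

theorem cycDim_span_singleton [DecidableEq F] (hn : n ≠ 0) (f : CycRing F n) :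
    cycDim F (Ideal.span {f}) =
      n - (EuclideanDomain.gcd (cycRep f) (X ^ n - C 1)).natDegree := by
  conv_lhs => rw [← mk_cycRep hn f, ← AdjoinRoot.span_mk_gcd]
  rw [cycDim, AdjoinRoot.finrank_span_mk_of_dvd (X_pow_sub_C_ne_zero (Nat.pos_of_ne_zero hn) 1)
      (EuclideanDomain.gcd_dvd_right _ _), natDegree_X_pow_sub_C]

theorem cycDim_span_singleton_eq_wt_msVecPoly [NeZero n] {ζ : AlgebraicClosure F}
    (hζ : IsPrimitiveRoot ζ n) (f : CycRing F n) :
    cycDim F (Ideal.span {f}) = wt (msVecPoly n ζ (cycRep f)) := by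
  classical
  rw [cycDim_span_singleton (NeZero.ne n), wt_msVecPoly hζ]

theorem cycDim_mono (hn : n ≠ 0) {I J : Ideal (CycRing F n)} (h : I ≤ J) :
    cycDim F I ≤ cycDim F J := by
  have := (AdjoinRoot.powerBasis (X_pow_sub_C_ne_zero (Nat.pos_of_ne_zero hn) (1 : F))).finite
  exact Submodule.finrank_mono fun _ hx => h hx

theorem cycDist_le_cycWt {I : Ideal (CycRing F n)} {f : CycRing F n} (hfI : f ∈ I)
    (hf : f ≠ 0) : cycDist I ≤ cycWt f :=
  Nat.sInf_le ⟨f, hfI, hf, rfl⟩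

theorem exists_cycWt_eq_cycDist {I : Ideal (CycRing F n)} {f : CycRing F n} (hfI : f ∈ I)
    (hf : f ≠ 0) : ∃ g ∈ I, g ≠ 0 ∧ cycWt g = cycDist I :=
  Nat.sInf_mem (s := {w | ∃ g ∈ I, g ≠ 0 ∧ cycWt g = w}) ⟨_, f, hfI, hf, rfl⟩

end CyclicCode

theorem mu_eq_min_wt_add_wt_msVec_general (n : ℕ) (F : Type*) [Field F] (hn : 1 ≤ n)
    (ζ : AlgebraicClosure F) (hζ : IsPrimitiveRoot ζ n) :
    mu F n = sInf {w | ∃ f : CycRing F n, f ≠ 0 ∧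
      cycWt f + wt (msVecPoly n ζ (cycRep f)) = w} := by
  have : NeZero n := NeZero.of_pos hn
  refine csInf_eq_csInf_of_forall_exists_le ?_ ?_
  · rintro _ ⟨f, hf, rfl⟩
    obtain ⟨g, hgf, hg, hgw⟩ := exists_cycWt_eq_cycDist (Ideal.mem_span_singleton_self f) hf
    refine ⟨_, ⟨g, hg, rfl⟩, ?_⟩
    rw [hgw, ← cycDim_span_singleton_eq_wt_msVecPoly hζ]
    have hspan : Ideal.span {g} ≤ Ideal.span {f} := (Ideal.span_singleton_le_iff_mem _).mpr hgf
    exact Nat.add_le_add_left (cycDim_mono (NeZero.ne n) hspan) _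
  · rintro _ ⟨f, hf, rfl⟩
    refine ⟨_, ⟨f, hf, rfl⟩, ?_⟩
    rw [← cycDim_span_singleton_eq_wt_msVecPoly hζ]
    exact Nat.add_le_add_right (cycDist_le_cycWt (Ideal.mem_span_singleton_self f) hf) _

/-- μ(F_q,n) = min{ w_H(f) + w_H(f̂) : f ∈ R(F_q,n), f ≠ 0 }, where f̂ is the
Mattson–Solomon vector of the degree-< n representative of f. -/
theorem mu_eq_min_wt_add_wt_msVec (q n : ℕ) (F : Type*) [Field F] [Fintype F]
    (hq : Fintype.card F = q) (hn : 1 ≤ n) (hcop : Nat.Coprime n q)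
    (ζ : AlgebraicClosure F) (hζ : IsPrimitiveRoot ζ n) :
    mu F n = sInf {w | ∃ f : CycRing F n, f ≠ 0 ∧
      cycWt f + wt (msVecPoly n ζ (cycRep f)) = w} :=
  mu_eq_min_wt_add_wt_msVec_general n F hn ζ hζ
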